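/- arXiv:0905.1710 — 3 statements merged into one kernel-verified Lean document; each statement's English description precedes it below -/
import Mathlib

section
/- Let Θ₁, Θ₂ be n×p complex matrices, D a positive definite p×p diagonal matrix, P a p×p orthogonal projection (diagonal with 0/1 entries) commuting with D, and β an n×n complex matrix. Set 𝒜 = i·diag(β*, β), Y = [[-Θ₁],[Θ₂]] D^{-1} P [Θ₂* Θ₁*], and J̃ = [[0,-I_n],[I_n,0]]. Then for every real y, the matrix H̃(y) := J̃* e^{-y𝒜} Y e^{y𝒜} satisfies H̃(y) = e^{y𝒜*} [[Θ₂],[Θ₁]] D^{-1} P [Θ₂* Θ₁*] e^{y𝒜}, and in particular H̃(y) is Hermitian and positive semidefinite. -/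
open Matrix
open scoped ComplexOrder

attribute [local instance] Matrix.normedAddCommGroup Matrix.normedSpace

/-!
Conjugation by the unitary `J̃` swaps the two diagonal blocks of `𝒜`, and since `i` is
skew-adjoint this gives `J̃* (-y𝒜) J̃ = y𝒜*`, hence `J̃* e^{-y𝒜} J̃ = e^{y𝒜*}`; likewise `J̃*` maps
`[[-Θ₁],[Θ₂]]` to `[[Θ₂],[Θ₁]]`. Inserting `J̃ J̃* = 1` yields the formula. Its middle factor is
`B (D⁻¹P) B*` with `D⁻¹P` diagonal and nonnegative, and `e^{y𝒜*} = (e^{y𝒜})*`, so `H̃(y)` is a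
congruence of a positive semidefinite matrix.
-/

open NormedSpace

namespace Matrix

section BlockSwap

variable {m n α : Type*} [DecidableEq m] [CommRing α]

theorem fromBlocks_zero_neg_one_one_zero_conjTranspose [StarRing α] :
    (fromBlocks 0 (-1) 1 0 : Matrix (m ⊕ m) (m ⊕ m) α)ᴴ = fromBlocks 0 1 (-1) 0 := by
  simp [fromBlocks_conjTranspose]

variable [Fintype m]

theorem fromBlocks_zero_neg_one_one_zero_mem_unitaryGroup [StarRing α] :
    (fromBlocks 0 (-1) 1 0 : Matrix (m ⊕ m) (m ⊕ m) α) ∈ unitaryGroup (m ⊕ m) α := by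
  rw [mem_unitaryGroup_iff, star_eq_conjTranspose, fromBlocks_zero_neg_one_one_zero_conjTranspose,
    fromBlocks_multiply]
  simp [← fromBlocks_one]

theorem fromBlocks_zero_one_neg_one_zero_mul_fromBlocks_mul (A B : Matrix m m α) :
    fromBlocks 0 1 (-1) 0 * fromBlocks A 0 0 B * fromBlocks 0 (-1) 1 0 = fromBlocks B 0 0 A := by
  simp [fromBlocks_multiply]

theorem fromBlocks_zero_one_neg_one_zero_mul_fromRows (A B : Matrix m n α) :
    (fromBlocks 0 1 (-1) 0 : Matrix (m ⊕ m) (m ⊕ m) α) * fromRows (-A) B = fromRows B A := by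
  rw [fromBlocks_mul_fromRows]
  simp only [Matrix.zero_mul, Matrix.one_mul, Matrix.neg_mul, neg_neg, zero_add, add_zero]

theorem fromBlocks_zero_neg_one_one_zero_conj_skew_smul_fromBlocks [StarRing α] (c : α)
    (hc : star c = -c) (B : Matrix m m α) :
    (fromBlocks 0 (-1) 1 0)ᴴ * (c • fromBlocks Bᴴ 0 0 B) * fromBlocks 0 (-1) 1 0 =
      -(c • fromBlocks Bᴴ 0 0 B)ᴴ := by
  rw [fromBlocks_zero_neg_one_one_zero_conjTranspose, mul_smul_comm, smul_mul_assoc,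
    fromBlocks_zero_one_neg_one_zero_mul_fromBlocks_mul, conjTranspose_smul, hc,
    fromBlocks_conjTranspose]
  simp

end BlockSwap

theorem exp_conjTranspose_mul_mul_of_mem_unitaryGroup {m 𝔸 : Type*} [Fintype m] [DecidableEq m]
    [NormedCommRing 𝔸] [NormedAlgebra ℚ 𝔸] [CompleteSpace 𝔸] [StarRing 𝔸] {U : Matrix m m 𝔸}
    (hU : U ∈ unitaryGroup m 𝔸) (A : Matrix m m 𝔸) :
    exp (Uᴴ * A * U) = Uᴴ * exp A * U :=
  exp_units_conj' (Unitary.toUnits ⟨U, hU⟩) A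

theorem posSemidef_inv_diagonal_mul_diagonal {ι 𝕜 : Type*} [Fintype ι] [DecidableEq ι] [RCLike 𝕜]
    {d q : ι → 𝕜} (hd : ∀ i, 0 < d i) (hq : ∀ i, 0 ≤ q i) :
    ((diagonal d)⁻¹ * diagonal q).PosSemidef := by
  have hinv : (diagonal d)⁻¹ = diagonal fun i => (d i)⁻¹ :=
    inv_eq_left_inv <| by
      rw [diagonal_mul_diagonal, ← diagonal_one]
      exact congrArg diagonal (funext fun i => inv_mul_cancel₀ (hd i).ne')
  rw [hinv, diagonal_mul_diagonal, posSemidef_diagonal_iff]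
  exact fun i => mul_nonneg (inv_nonneg.mpr (hd i).le) (hq i)

end Matrix

theorem stmt_3 (n p : ℕ)
    (Θ₁ Θ₂ : Matrix (Fin n) (Fin p) ℂ)
    (d : Fin p → ℝ) (hd : ∀ i, 0 < d i)
    (D : Matrix (Fin p) (Fin p) ℂ) (hD : D = Matrix.diagonal (fun i => (d i : ℂ)))
    (q : Fin p → ℂ) (hq : ∀ i, q i = 0 ∨ q i = 1)
    (P : Matrix (Fin p) (Fin p) ℂ) (hP : P = Matrix.diagonal q)
    (β : Matrix (Fin n) (Fin n) ℂ)
    (𝒜 : Matrix (Fin n ⊕ Fin n) (Fin n ⊕ Fin n) ℂ)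
    (h𝒜 : 𝒜 = Complex.I • Matrix.fromBlocks βᴴ 0 0 β)
    (Y : Matrix (Fin n ⊕ Fin n) (Fin n ⊕ Fin n) ℂ)
    (hY : Y = Matrix.fromRows (-Θ₁) Θ₂ * D⁻¹ * P * Matrix.fromCols Θ₂ᴴ Θ₁ᴴ)
    (J : Matrix (Fin n ⊕ Fin n) (Fin n ⊕ Fin n) ℂ)
    (hJ : J = Matrix.fromBlocks 0 (-1) 1 0)
    (Htil : ℝ → Matrix (Fin n ⊕ Fin n) (Fin n ⊕ Fin n) ℂ)
    (hH : ∀ y : ℝ, Htil y =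
      Jᴴ * NormedSpace.exp ((-y) • 𝒜) * Y * NormedSpace.exp (y • 𝒜)) :
    ∀ y : ℝ,
      Htil y = NormedSpace.exp (y • 𝒜ᴴ) *
          (Matrix.fromRows Θ₂ Θ₁ * D⁻¹ * P * Matrix.fromCols Θ₂ᴴ Θ₁ᴴ) *
          NormedSpace.exp (y • 𝒜) ∧
        (Htil y).IsHermitian ∧ (Htil y).PosSemidef := by
  intro y
  set M := Matrix.fromRows Θ₂ Θ₁ * D⁻¹ * P * Matrix.fromCols Θ₂ᴴ Θ₁ᴴ
  have hJ_unitary : J ∈ unitaryGroup (Fin n ⊕ Fin n) ℂ :=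
    hJ ▸ fromBlocks_zero_neg_one_one_zero_mem_unitaryGroup
  have hJJ : J * Jᴴ = 1 := mem_unitaryGroup_iff.mp hJ_unitary
  have hconj : Jᴴ * ((-y) • 𝒜) * J = y • 𝒜ᴴ := by
    have h : Jᴴ * 𝒜 * J = -𝒜ᴴ := by
      rw [hJ, h𝒜]
      exact fromBlocks_zero_neg_one_one_zero_conj_skew_smul_fromBlocks _ Complex.conj_I β
    rw [Matrix.mul_smul, Matrix.smul_mul, h, smul_neg, neg_smul, neg_neg]
  have hJY : Jᴴ * Y = M := by
    rw [hY, hJ, fromBlocks_zero_neg_one_one_zero_conjTranspose, ← Matrix.mul_assoc,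
      ← Matrix.mul_assoc, ← Matrix.mul_assoc, fromBlocks_zero_one_neg_one_zero_mul_fromRows]
  have hformula : Htil y = NormedSpace.exp (y • 𝒜ᴴ) * M * NormedSpace.exp (y • 𝒜) := by
    calc Htil y = Jᴴ * NormedSpace.exp ((-y) • 𝒜) * (J * Jᴴ) * Y * NormedSpace.exp (y • 𝒜) := by
          rw [hH, hJJ, Matrix.mul_one]
      _ = NormedSpace.exp (y • 𝒜ᴴ) * M * NormedSpace.exp (y • 𝒜) := by
          rw [← hconj, exp_conjTranspose_mul_mul_of_mem_unitaryGroup hJ_unitary, ← hJY]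
          simp only [Matrix.mul_assoc]
  have hM : M.PosSemidef := by
    have hDP := posSemidef_inv_diagonal_mul_diagonal (fun i => Complex.zero_lt_real.mpr (hd i))
      fun i => (hq i).elim (fun h => h ▸ le_rfl) fun h => h ▸ zero_le_one
    have h := hDP.mul_mul_conjTranspose_same (fromRows Θ₂ Θ₁)
    rw [conjTranspose_fromRows_eq_fromCols_conjTranspose, ← hD, ← hP] at h
    simpa only [M, Matrix.mul_assoc] using h
  have hpsd : (Htil y).PosSemidef := by
    have hexp : NormedSpace.exp (y • 𝒜ᴴ) = (NormedSpace.exp (y • 𝒜))ᴴ := by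
      rw [← exp_conjTranspose, conjTranspose_smul, star_trivial]
    rw [hformula, hexp]
    exact hM.conjTranspose_mul_mul_same _
  exact ⟨hformula, hpsd.isHermitian, hpsd⟩
end

section
/- Let γ be a p×2p complex matrix with γ J γ* = D where D is positive definite and J = [[0,I_p],[I_p,0]]. Let X be a p×2p matrix of rank p with X J γ* = 0. Then X J X* is negative definite. -/
open Matrix Module
open scoped ComplexOrder

/-! For `v ≠ 0` put `w = Xᴴ v ≠ 0`, so that `γ J w = 0`. If `w* J w ≥ 0`, then the form
`u ↦ u* J u` equals `a* D a + |t|² w* J w ≥ 0` at `u = γᴴ a + t w`, so the subspace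
`range γᴴ + ℂ w` is `J`-nonnegative; it has dimension `p + 1`, since `γ J` sends `γᴴ a + t w`
to `D a`. This is impossible: a `J`-nonnegative subspace meets the `J`-negative subspace
`{(x, -x)}`, of dimension `p`, only in `0`. -/

theorem Matrix.mulVec_injective_of_rank_eq_card {K m n : Type*} [Field K] [Fintype n]
    {A : Matrix m n K} (h : A.rank = Fintype.card n) : Function.Injective A.mulVec := by
  have hsum := LinearMap.finrank_range_add_finrank_ker A.mulVecLin
  rw [← Matrix.rank, h, finrank_fintype_fun_eq_card, Nat.add_eq_left,
    Submodule.finrank_eq_zero] at hsum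
  exact LinearMap.ker_eq_bot.mp hsum

section NonnegSubspace

variable {n : Type*} [Fintype n]

def IsNonnegSubspace (J : Matrix n n ℂ) (W : Submodule ℂ (n → ℂ)) : Prop :=
  ∀ u ∈ W, 0 ≤ star u ⬝ᵥ (J *ᵥ u)

theorem IsNonnegSubspace.finrank_add_finrank_le {J : Matrix n n ℂ} {W N : Submodule ℂ (n → ℂ)}
    (hW : IsNonnegSubspace J W) (hN : ∀ u ∈ N, u ≠ 0 → star u ⬝ᵥ (J *ᵥ u) < 0) :
    finrank ℂ W + finrank ℂ N ≤ Fintype.card n := by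
  rw [← finrank_fintype_fun_eq_card ℂ]
  refine Submodule.finrank_add_finrank_le_of_disjoint
    (Submodule.disjoint_def.mpr fun u huW huN => ?_)
  by_contra hu
  exact (hN u huN hu).not_ge (hW u huW)

end NonnegSubspace

section FromBlocks

variable {ι : Type*} [Fintype ι] [DecidableEq ι]

theorem star_dotProduct_fromBlocks_mulVec_sumElim_neg (x : ι → ℂ) :
    star (Sum.elim x (-x)) ⬝ᵥ (fromBlocks 0 1 1 0 *ᵥ Sum.elim x (-x)) = -(2 * (star x ⬝ᵥ x)) := by
  simp only [Function.star_sumElim, star_neg, fromBlocks_mulVec, Sum.elim_comp_inl, zero_mulVec,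
    Sum.elim_comp_inr, one_mulVec, zero_add, add_zero, sumElim_dotProduct_sumElim, dotProduct_neg,
    neg_dotProduct]
  ring

theorem IsNonnegSubspace.finrank_le_of_fromBlocks {W : Submodule ℂ (ι ⊕ ι → ℂ)}
    (hW : IsNonnegSubspace (fromBlocks 0 1 1 0) W) : finrank ℂ W ≤ Fintype.card ι := by
  let B : Matrix (ι ⊕ ι) ι ℂ := fromRows 1 (-1)
  have hB : ∀ x, B *ᵥ x = Sum.elim x (-x) := fun x => by
    simp [B, fromRows_mulVec, neg_mulVec]
  have hBinj : Function.Injective B.mulVec := fun x y hxy => funext fun i => by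
    simpa [hB] using congrFun hxy (Sum.inl i)
  have hneg : ∀ u ∈ LinearMap.range B.mulVecLin, u ≠ 0 →
      star u ⬝ᵥ (fromBlocks 0 1 1 0 *ᵥ u) < 0 := by
    rintro _ ⟨x, rfl⟩ hu
    have hx : x ≠ 0 := by rintro rfl; simp at hu
    rw [mulVecLin_apply, hB, star_dotProduct_fromBlocks_mulVec_sumElim_neg, neg_lt_zero]
    exact mul_pos two_pos (dotProduct_star_self_pos_iff.mpr hx)
  have hsum := hW.finrank_add_finrank_le hneg
  rw [LinearMap.finrank_range_of_inj hBinj, finrank_fintype_fun_eq_card, Fintype.card_sum] at hsum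
  omega

end FromBlocks

section Extension

variable {m n : Type*} [Fintype m] [Fintype n]

theorem Matrix.star_mulVec_dotProduct_mulVec_mulVec (A : Matrix n m ℂ) (M : Matrix n n ℂ)
    (a b : m → ℂ) : star (A *ᵥ a) ⬝ᵥ (M *ᵥ (A *ᵥ b)) = star a ⬝ᵥ ((Aᴴ * M * A) *ᵥ b) := by
  rw [star_mulVec, dotProduct_mulVec, vecMul_vecMul, ← dotProduct_mulVec, mulVec_mulVec]

variable {J : Matrix n n ℂ} {G : Matrix m n ℂ} {w : n → ℂ}

theorem star_dotProduct_mulVec_conjTranspose_mulVec_add_smul (hJ : J.IsHermitian)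
    (hw : (G * J) *ᵥ w = 0) (a : m → ℂ) (t : ℂ) :
    star (Gᴴ *ᵥ a + t • w) ⬝ᵥ (J *ᵥ (Gᴴ *ᵥ a + t • w)) =
      star a ⬝ᵥ ((G * J * Gᴴ) *ᵥ a) + star t * t * (star w ⬝ᵥ (J *ᵥ w)) := by
  have hcross : star (Gᴴ *ᵥ a) ⬝ᵥ (J *ᵥ w) = 0 := by
    rw [star_mulVec, conjTranspose_conjTranspose, ← dotProduct_mulVec, mulVec_mulVec, hw,
      dotProduct_zero]
  have hcross' : star w ⬝ᵥ (J *ᵥ (Gᴴ *ᵥ a)) = 0 := by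
    rw [dotProduct_mulVec, ← star_star (star w ᵥ* J), star_vecMul, star_star, hJ.eq,
      star_dotProduct, hcross, star_zero]
  simp only [star_add, mulVec_add, add_dotProduct, dotProduct_add, star_smul, mulVec_smul,
    smul_dotProduct, dotProduct_smul, star_mulVec_dotProduct_mulVec_mulVec,
    conjTranspose_conjTranspose, hcross, hcross', smul_eq_mul]
  ring

theorem injective_coprod_mulVecLin_toSpanSingleton [DecidableEq m] (hG : IsUnit (G * J * Gᴴ))
    (hw : (G * J) *ᵥ w = 0) (hw0 : w ≠ 0) :
    Function.Injective (Gᴴ.mulVecLin.coprod (LinearMap.toSpanSingleton ℂ _ w)) := by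
  rw [← LinearMap.ker_eq_bot, LinearMap.ker_eq_bot']
  rintro ⟨a, t⟩ h
  simp only [LinearMap.coprod_apply, mulVecLin_apply, LinearMap.toSpanSingleton_apply] at h
  have ha : a = 0 := by
    refine (mulVec_injective_iff_isUnit.mpr hG).eq_iff' (mulVec_zero _) |>.mp ?_
    simpa [mulVec_add, mulVec_smul, mulVec_mulVec, ← Matrix.mul_assoc, hw] using
      congrArg ((G * J) *ᵥ ·) h
  subst ha
  simp only [mulVec_zero, zero_add, smul_eq_zero, hw0, or_false] at h
  simp [h]

theorem star_dotProduct_mulVec_neg_of_finrank_le (hJ : J.IsHermitian)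
    (hmax : ∀ W, IsNonnegSubspace J W → finrank ℂ W ≤ Fintype.card m)
    (hG : (G * J * Gᴴ).PosDef) (hw : (G * J) *ᵥ w = 0) (hw0 : w ≠ 0) :
    star w ⬝ᵥ (J *ᵥ w) < 0 := by
  classical
  have hreal : (star w ⬝ᵥ (J *ᵥ w)).im = 0 := hJ.im_star_dotProduct_mulVec_self w
  by_contra hc
  have hc : 0 ≤ star w ⬝ᵥ (J *ᵥ w) := Complex.nonneg_iff.mpr
    ⟨(Complex.not_lt_zero_iff.mp hc).resolve_right (not_not.mpr hreal), hreal.symm⟩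
  set f := Gᴴ.mulVecLin.coprod (LinearMap.toSpanSingleton ℂ _ w)
  have hnonneg : IsNonnegSubspace J (LinearMap.range f) := by
    rintro _ ⟨⟨a, t⟩, rfl⟩
    rw [LinearMap.coprod_apply, mulVecLin_apply, LinearMap.toSpanSingleton_apply,
      star_dotProduct_mulVec_conjTranspose_mulVec_add_smul hJ hw]
    exact add_nonneg (hG.posSemidef.dotProduct_mulVec_nonneg a)
      (mul_nonneg (star_mul_self_nonneg t) hc)
  have hdim := hmax _ hnonneg
  rw [LinearMap.finrank_range_of_inj (injective_coprod_mulVecLin_toSpanSingleton hG.isUnit hw hw0),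
    finrank_prod, finrank_fintype_fun_eq_card, finrank_self] at hdim
  omega

end Extension

theorem stmt_8 (p : ℕ)
    (J : Matrix (Fin p ⊕ Fin p) (Fin p ⊕ Fin p) ℂ)
    (hJ : J = Matrix.fromBlocks 0 1 1 0)
    (γ X : Matrix (Fin p) (Fin p ⊕ Fin p) ℂ)
    (D : Matrix (Fin p) (Fin p) ℂ) (hD : D.PosDef)
    (hγ : γ * J * γᴴ = D)
    (hrank : X.rank = p)
    (hX : X * J * γᴴ = 0) :
    (-(X * J * Xᴴ)).PosDef := by
  have hJH : J.IsHermitian := by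
    subst hJ
    simp [IsHermitian, fromBlocks_conjTranspose]
  have hγJX : γ * J * Xᴴ = 0 := by
    simpa [conjTranspose_mul, hJH.eq, Matrix.mul_assoc] using congrArg conjTranspose hX
  have hXinj : Function.Injective Xᴴ.mulVec :=
    mulVec_injective_of_rank_eq_card (by rw [rank_conjTranspose, hrank, Fintype.card_fin])
  have hmax (W : Submodule ℂ (Fin p ⊕ Fin p → ℂ)) (hW : IsNonnegSubspace J W) :
      finrank ℂ W ≤ Fintype.card (Fin p) := by
    subst hJ
    exact hW.finrank_le_of_fromBlocks
  refine posDef_iff_dotProduct_mulVec.mpr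
    ⟨(isHermitian_mul_mul_conjTranspose X hJH).neg, fun v hv => ?_⟩
  have hw0 : Xᴴ *ᵥ v ≠ 0 := fun h => hv (hXinj (h.trans (mulVec_zero _).symm))
  have hw : (γ * J) *ᵥ (Xᴴ *ᵥ v) = 0 := by rw [mulVec_mulVec, hγJX, zero_mulVec]
  have hneg := star_dotProduct_mulVec_neg_of_finrank_le hJH hmax (hγ ▸ hD) hw hw0
  rw [star_mulVec_dotProduct_mulVec_mulVec, conjTranspose_conjTranspose] at hneg
  rwa [neg_mulVec, dotProduct_neg, neg_pos]
end

section
/- Let γ, X̃ be p×2p complex matrices with γ J γ* = D (D > 0 diagonal), X̃ J X̃* = -I_p, X̃ J γ* = 0, and J = [[0,I_p],[I_p,0]]. Define L = [[D^{-1/2}γ],[X̃]] (2p×2p). Then L is invertible with L^{-1} = [J γ* D^{-1/2}, -J X̃*], and L^{-1} H₀ L = J γ* γ, where H₀ = [[D,0],[0,0]]. In particular, J γ* γ is similar to J H₀. -/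
/-!
For the indefinite form `⟨x, y⟩ = x J yᴴ`, the rows of `E⁻¹ γ` are `J`-orthonormal of norm
`+1`, those of `Xt` are `J`-orthonormal of norm `-1`, and the two families are `J`-orthogonal.
Multiplying `L` against the columns of `M` computes exactly these pairings, so `L M = 1`.
Conjugating `H₀` by `L` only sees its corner `D = E E`, and `E⁻¹ (E E) E⁻¹ = 1` leaves
`J γᴴ γ`.
-/

open Matrix

namespace Matrix

variable {l m n R : Type*}

theorem fromRows_mul_fromCols_eq_one [Semiring R] [Fintype l] [DecidableEq m] [DecidableEq n]
    {A : Matrix m l R} {B : Matrix n l R} {C : Matrix l m R} {D : Matrix l n R}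
    (hAC : A * C = 1) (hAD : A * D = 0) (hBC : B * C = 0) (hBD : B * D = 1) :
    fromRows A B * fromCols C D = 1 := by
  rw [fromRows_mul_fromCols, hAC, hAD, hBC, hBD, fromBlocks_one]

theorem fromCols_mul_fromBlocks_zero_mul_fromRows [Semiring R] [Fintype m] [Fintype n]
    (C : Matrix l m R) (D : Matrix l n R) (H : Matrix m m R) (A : Matrix m l R)
    (B : Matrix n l R) :
    fromCols C D * (fromBlocks H 0 0 0 : Matrix (m ⊕ n) (m ⊕ n) R) * fromRows A B =
      C * H * A := by
  simp [fromCols_mul_fromBlocks, fromCols_mul_fromRows]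

theorem inv_mul_mul_self_mul_inv [Fintype m] [DecidableEq m] [CommRing R] {E : Matrix m m R}
    (hE : IsUnit E.det) : E⁻¹ * (E * E) * E⁻¹ = 1 := by
  rw [← Matrix.mul_assoc, nonsing_inv_mul E hE, Matrix.one_mul, mul_nonsing_inv E hE]

end Matrix

open scoped ComplexOrder

theorem stmt_9_general (p : ℕ)
    (J : Matrix (Fin p ⊕ Fin p) (Fin p ⊕ Fin p) ℂ)
    (hJ : J = Matrix.fromBlocks 0 1 1 0)
    (γ Xt : Matrix (Fin p) (Fin p ⊕ Fin p) ℂ)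
    (D E : Matrix (Fin p) (Fin p) ℂ) (hE : E.PosDef)
    (hED : E * E = D)
    (hγ : γ * J * γᴴ = D)
    (hXt : Xt * J * Xtᴴ = -1)
    (hXγ : Xt * J * γᴴ = 0)
    (L M H₀ : Matrix (Fin p ⊕ Fin p) (Fin p ⊕ Fin p) ℂ)
    (hL : L = Matrix.fromRows (E⁻¹ * γ) Xt)
    (hM : M = Matrix.fromCols (J * γᴴ * E⁻¹) (-(J * Xtᴴ)))
    (hH₀ : H₀ = Matrix.fromBlocks D 0 0 0) :
    L * M = 1 ∧ M * L = 1 ∧ L⁻¹ = M ∧ L⁻¹ * H₀ * L = J * γᴴ * γ := by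
  have hEE : E⁻¹ * (E * E) * E⁻¹ = 1 :=
    inv_mul_mul_self_mul_inv ((isUnit_iff_isUnit_det E).1 hE.isUnit)
  have hJ_herm : Jᴴ = J := by simp [hJ, fromBlocks_conjTranspose]
  have hγX : γ * J * Xtᴴ = 0 := by
    simpa [Matrix.mul_assoc, hJ_herm] using congrArg conjTranspose hXγ
  have hLM : L * M = 1 := by
    rw [hL, hM]
    refine fromRows_mul_fromCols_eq_one ?_ ?_ ?_ ?_
    · rw [← hEE, hED, ← hγ]; simp only [Matrix.mul_assoc]
    · rw [Matrix.mul_neg, neg_eq_zero, Matrix.mul_assoc, ← Matrix.mul_assoc γ, hγX,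
        Matrix.mul_zero]
    · rw [← Matrix.mul_assoc, ← Matrix.mul_assoc, hXγ, Matrix.zero_mul]
    · rw [Matrix.mul_neg, ← Matrix.mul_assoc, hXt, neg_neg]
  have hLinv : L⁻¹ = M := inv_eq_right_inv hLM
  refine ⟨hLM, mul_eq_one_comm.mp hLM, hLinv, ?_⟩
  rw [hLinv, hM, hH₀, hL, fromCols_mul_fromBlocks_zero_mul_fromRows, ← hED]
  calc J * γᴴ * E⁻¹ * (E * E) * (E⁻¹ * γ)
        = J * γᴴ * (E⁻¹ * (E * E) * E⁻¹) * γ := by simp only [Matrix.mul_assoc]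
    _ = J * γᴴ * γ := by rw [hEE, Matrix.mul_one]

theorem stmt_9 (p : ℕ)
    (J : Matrix (Fin p ⊕ Fin p) (Fin p ⊕ Fin p) ℂ)
    (hJ : J = Matrix.fromBlocks 0 1 1 0)
    (γ Xt : Matrix (Fin p) (Fin p ⊕ Fin p) ℂ)
    (D E : Matrix (Fin p) (Fin p) ℂ) (hD : D.PosDef) (hE : E.PosDef)
    (hED : E * E = D)
    (hγ : γ * J * γᴴ = D)
    (hXt : Xt * J * Xtᴴ = -1)
    (hXγ : Xt * J * γᴴ = 0)
    (L M H₀ : Matrix (Fin p ⊕ Fin p) (Fin p ⊕ Fin p) ℂ)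
    (hL : L = Matrix.fromRows (E⁻¹ * γ) Xt)
    (hM : M = Matrix.fromCols (J * γᴴ * E⁻¹) (-(J * Xtᴴ)))
    (hH₀ : H₀ = Matrix.fromBlocks D 0 0 0) :
    L * M = 1 ∧ M * L = 1 ∧ L⁻¹ = M ∧ L⁻¹ * H₀ * L = J * γᴴ * γ :=
  stmt_9_general p J hJ γ Xt D E hE hED hγ hXt hXγ L M H₀ hL hM hH₀
end
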